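/- There exists a family H of functions from ℕ to ℕ, each with all values ≥ 1 and limsup equal to ∞, with |H| = 𝔠 (the cardinality of the continuum), such that for all distinct f, g ∈ H, fN(f) ⊄ fN(g); i.e., the ideals fN(f) for f ∈ H form an antichain under inclusion of cardinality 𝔠. -/

import Mathlib

open Filter Set

/-- The basic clopen set `[σ]` in the Baire space determined by a finite sequence `σ`. -/
def cylinder (σ : List ℕ) : Set (ℕ → ℕ) :=
  {x | ∀ i : Fin σ.length, x i = σ.get i}

/-- `limsup_n h(n) = ∞`, i.e. `h` takes arbitrarily large values frequently. -/
def LimsupInfty (h : ℕ → ℕ) : Prop :=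
  ∀ m : ℕ, ∃ᶠ n in Filter.atTop, m ≤ h n

/-- The family `fN(h)` of fake null sets: `F ∈ fN(h)` iff for every `ε > 0` there is a
sequence of finite sequences `σ_n` with `∑ 1/h(|σ_n|) < ε` covering `F`. -/
def fN (h : ℕ → ℕ) (F : Set (ℕ → ℕ)) : Prop :=
  ∀ ε : ℝ, 0 < ε →
    ∃ σ : ℕ → List ℕ,
      Summable (fun n => (1 : ℝ) / (h (σ n).length : ℝ)) ∧
      (∑' n, (1 : ℝ) / (h (σ n).length : ℝ)) < ε ∧
      F ⊆ ⋃ n, cylinder (σ n)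

/-- The restriction of `x` to the interval `[l, u)`, extended by `0` elsewhere. -/
def restrIco (x : ℕ → ℕ) (l u : ℕ) : ℕ → ℕ :=
  fun i => if l ≤ i ∧ i < u then x i else 0

/-- `J` is a set of patterns on the interval `[l, u)`: every element vanishes off `[l, u)`. -/
def SuppIco (l u : ℕ) (J : Set (ℕ → ℕ)) : Prop :=
  ∀ σ ∈ J, ∀ i, ¬ (l ≤ i ∧ i < u) → σ i = 0

/-- The family `fE(h)`: partition `ℕ` into consecutive nonempty intervals `I_n = [a n, a (n+1))`
(`a 0 = 0`, `a` strictly increasing), patterns `J_n ⊆ ω^{I_n}` with `∑ |J_n|/h(|I_n|) < ∞`,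
and `F ⊆ {x : x↾I_n ∈ J_n for all but finitely many n}`. -/
def fE (h : ℕ → ℕ) (F : Set (ℕ → ℕ)) : Prop :=
  ∃ a : ℕ → ℕ, a 0 = 0 ∧ StrictMono a ∧
    ∃ J : ℕ → Set (ℕ → ℕ),
      (∀ n, SuppIco (a n) (a (n+1)) (J n)) ∧
      (∀ n, (J n).Finite) ∧
      Summable (fun n => ((J n).ncard : ℝ) / (h (a (n+1) - a n) : ℝ)) ∧
      F ⊆ {x | ∀ᶠ n in Filter.atTop, restrIco x (a n) (a (n+1)) ∈ J n}

/-- The family `fS(h)` of fake small sets: as `fE(h)` but with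
`x↾I_n ∈ J_n` for infinitely many `n`. -/
def fS (h : ℕ → ℕ) (F : Set (ℕ → ℕ)) : Prop :=
  ∃ a : ℕ → ℕ, a 0 = 0 ∧ StrictMono a ∧
    ∃ J : ℕ → Set (ℕ → ℕ),
      (∀ n, SuppIco (a n) (a (n+1)) (J n)) ∧
      (∀ n, (J n).Finite) ∧
      Summable (fun n => ((J n).ncard : ℝ) / (h (a (n+1) - a n) : ℝ)) ∧
      F ⊆ {x | ∃ᶠ n in Filter.atTop, restrIco x (a n) (a (n+1)) ∈ J n}

/-- The family `fE(Fin)`: as `fE(h)` but one only requires each pattern set `J_n` to be finite. -/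
def fEFin (F : Set (ℕ → ℕ)) : Prop :=
  ∃ a : ℕ → ℕ, a 0 = 0 ∧ StrictMono a ∧
    ∃ J : ℕ → Set (ℕ → ℕ),
      (∀ n, SuppIco (a n) (a (n+1)) (J n)) ∧
      (∀ n, (J n).Finite) ∧
      F ⊆ {x | ∀ᶠ n in Filter.atTop, restrIco x (a n) (a (n+1)) ∈ J n}

/-- The family `fS(Fin)`: as `fS(h)` but one only requires each pattern set `J_n` to be finite. -/
def fSFin (F : Set (ℕ → ℕ)) : Prop :=
  ∃ a : ℕ → ℕ, a 0 = 0 ∧ StrictMono a ∧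
    ∃ J : ℕ → Set (ℕ → ℕ),
      (∀ n, SuppIco (a n) (a (n+1)) (J n)) ∧
      (∀ n, (J n).Finite) ∧
      F ⊆ {x | ∃ᶠ n in Filter.atTop, restrIco x (a n) (a (n+1)) ∈ J n}

/-- The family `fN(Fin)`: there are finite `S_n ⊆ ω^n` with
`F ⊆ {x : x↾n ∈ S_n for infinitely many n}`. -/
def fNFin (F : Set (ℕ → ℕ)) : Prop :=
  ∃ S : (n : ℕ) → Set (Fin n → ℕ),
    (∀ n, (S n).Finite) ∧
    F ⊆ {x | ∃ᶠ n in Filter.atTop, (fun i : Fin n => x i) ∈ S n}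

/-- The σ-ideal `M_-`: there are `x_F ∈ ω^ω` and a partition of `ℕ` into consecutive nonempty
intervals `I_n = [a n, a (n+1))` with `F ⊆ {x : x↾I_n ≠ x_F↾I_n for all but finitely many n}`. -/
def Mminus (F : Set (ℕ → ℕ)) : Prop :=
  ∃ xF : ℕ → ℕ, ∃ a : ℕ → ℕ, a 0 = 0 ∧ StrictMono a ∧
    F ⊆ {x | ∀ᶠ n in Filter.atTop, ∃ i, a n ≤ i ∧ i < a (n+1) ∧ x i ≠ xF i}

/-!
For `x : ℕ → Bool` let `A_x` be the set of codes of the finite prefixes of `x`, let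
`h_x n = 2 ^ 3 ^ n` for `n ∈ A_x` and `h_x n = 1` otherwise, and let `F_y = ∏ n, [0, h_y (n + 1))`.

The uniform product measure on `F_y` gives a cylinder of length `l` mass
`∏_{i<l} 1 / h_y (i + 1) ≤ 1 / h_y l`, so by the mass distribution principle no cover of `F_y`
has `h_y`-cost below `1`: `F_y ∉ fN(h_y)`.

If `x ≠ y`, then `A_x \ A_y` contains arbitrarily large `l` (codes of long prefixes of `x`).
There `F_y` is covered by `∏_{i<l} h_y (i + 1) ≤ ∏_{i<l} 2 ^ 3 ^ i ≤ 2 ^ 3 ^ l / 2 ^ l` cylinders of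
length `l`, each of `h_x`-cost `2 ^ (-3 ^ l)`; padding with cylinders of lengths in `A_x`, on which
`h_x` is huge, turns this finite cover into a sequence: `F_y ∈ fN(h_x)`.
-/

open MeasureTheory hiding cylinder

theorem not_fN_of_measure {h : ℕ → ℕ} {F : Set (ℕ → ℕ)} (μ : Measure (ℕ → ℕ))
    [IsFiniteMeasure μ] (hF : μ F ≠ 0)
    (hμ : ∀ σ, μ (cylinder σ) ≤ ENNReal.ofReal (1 / h σ.length)) : ¬ fN h F := by
  intro hfN
  obtain ⟨σ, hsum, hlt, hcov⟩ :=
    hfN (μ F).toReal (ENNReal.toReal_pos hF (measure_ne_top μ F))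
  refine lt_irrefl (μ F) ?_
  calc μ F ≤ ∑' n, μ (cylinder (σ n)) := (measure_mono hcov).trans (measure_iUnion_le _)
    _ ≤ ∑' n, ENNReal.ofReal (1 / h (σ n).length) := ENNReal.tsum_le_tsum fun n => hμ _
    _ = ENNReal.ofReal (∑' n, 1 / (h (σ n).length : ℝ)) :=
      (ENNReal.ofReal_tsum_of_nonneg (fun n => by positivity) hsum).symm
    _ < ENNReal.ofReal (μ F).toReal :=
      (ENNReal.ofReal_lt_ofReal_iff (ENNReal.toReal_pos hF (measure_ne_top μ F))).2 hlt
    _ = μ F := ENNReal.ofReal_toReal (measure_ne_top μ F)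

noncomputable def uniformProduct (k : ℕ → ℕ) (hk : ∀ n, 0 < k n) : Measure (ℕ → ℕ) :=
  Measure.infinitePi fun n =>
    (PMF.uniformOfFinset (Finset.range (k n)) (Finset.nonempty_range_iff.2 (hk n).ne')).toMeasure

theorem cylinder_eq_pi (σ : List ℕ) :
    cylinder σ = (Finset.range σ.length : Set ℕ).pi fun i => {σ.getD i 0} := by
  ext x
  simp +contextual [cylinder, Fin.forall_iff]

section uniformProduct

variable {k : ℕ → ℕ} (hk : ∀ n, 0 < k n)

instance : IsProbabilityMeasure (uniformProduct k hk) := by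
  unfold uniformProduct; infer_instance

theorem uniformProduct_pi_Iio : uniformProduct k hk (univ.pi fun n => Iio (k n)) = 1 := by
  rw [uniformProduct, Measure.infinitePi_pi_univ _ fun _ => measurableSet_Iio]
  refine (tprod_congr fun n => ?_).trans tprod_one
  rw [PMF.toMeasure_apply_eq_one_iff _ measurableSet_Iio, PMF.support_uniformOfFinset]
  exact fun x hx => mem_Iio.2 (Finset.mem_range.1 hx)

theorem uniformProduct_cylinder_le (σ : List ℕ) :
    uniformProduct k hk (cylinder σ) ≤ ((∏ i ∈ Finset.range σ.length, k i : ℕ) : ENNReal)⁻¹ := by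
  rw [cylinder_eq_pi, uniformProduct, Measure.infinitePi_pi _ fun _ _ => measurableSet_singleton _]
  rw [Nat.cast_prod, ENNReal.prod_inv_distrib fun i _ j _ _ => Or.inr (ENNReal.natCast_ne_top _)]
  refine Finset.prod_le_prod' fun i _ => ?_
  rw [PMF.toMeasure_apply_singleton _ _ (measurableSet_singleton _), PMF.uniformOfFinset_apply]
  split_ifs <;> simp

end uniformProduct

theorem not_fN_pi_Iio {h k : ℕ → ℕ} (hh : ∀ l, 0 < h l)
    (hhk : ∀ l, h l ≤ ∏ i ∈ Finset.range l, k i) : ¬ fN h (univ.pi fun n => Iio (k n)) := by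
  have hk : ∀ n, 0 < k n := fun n =>
    Nat.pos_of_ne_zero fun hn => (hh (n + 1)).ne' <| Nat.eq_zero_of_le_zero <|
      (hhk (n + 1)).trans_eq <| Finset.prod_eq_zero (Finset.self_mem_range_succ n) hn
  refine not_fN_of_measure (uniformProduct k hk) (by simp [uniformProduct_pi_Iio]) fun σ => ?_
  refine (uniformProduct_cylinder_le hk σ).trans ?_
  rw [one_div, ENNReal.ofReal_inv_of_pos (by exact_mod_cast hh _), ENNReal.ofReal_natCast]
  exact ENNReal.inv_le_inv.2 (by exact_mod_cast hhk _)

theorem LimsupInfty.exists_tsum_one_div_lt {h : ℕ → ℕ} (hh : LimsupInfty h) {δ : ℝ}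
    (hδ : 0 < δ) : ∃ p : ℕ → ℕ,
      Summable (fun n => (1 : ℝ) / h (p n)) ∧ ∑' n, (1 : ℝ) / h (p n) < δ := by
  obtain ⟨M, hM⟩ := exists_nat_gt (2 / δ)
  have hM0 : (0 : ℝ) < M := (div_pos two_pos hδ).trans hM
  choose p hp using fun n => (hh (M * 2 ^ n)).exists
  have hb : HasSum (fun n : ℕ => (1 / 2 : ℝ) ^ n / M) (2 / M) := by
    simpa [div_eq_mul_inv] using hasSum_geometric_two.mul_right (M : ℝ)⁻¹
  have hle : ∀ n, (1 : ℝ) / h (p n) ≤ (1 / 2) ^ n / M := fun n =>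
    calc (1 : ℝ) / h (p n) ≤ 1 / (M * 2 ^ n) :=
          one_div_le_one_div_of_le (by positivity) (by exact_mod_cast hp n)
      _ = (1 / 2) ^ n / M := by rw [one_div_pow, div_div, mul_comm]
  have hsum : Summable fun n => (1 : ℝ) / h (p n) :=
    hb.summable.of_nonneg_of_le (fun n => by positivity) hle
  refine ⟨p, hsum, (hsum.tsum_le_tsum hle hb.summable).trans_lt ?_⟩
  rw [hb.tsum_eq, div_lt_iff₀ hM0]
  rw [div_lt_iff₀ hδ] at hM
  linarith

theorem fN_of_finite_covers {h : ℕ → ℕ} {F : Set (ℕ → ℕ)} (hh : LimsupInfty h)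
    (hF : ∀ ε > 0, ∃ S : Finset (List ℕ),
      ∑ σ ∈ S, (1 : ℝ) / h σ.length < ε ∧ F ⊆ ⋃ σ ∈ S, cylinder σ) :
    fN h F := by
  intro ε hε
  obtain ⟨S, hS, hFS⟩ := hF (ε / 2) (half_pos hε)
  obtain ⟨p, hpsum, hp⟩ := hh.exists_tsum_one_div_lt (half_pos hε)
  let e := S.equivFin
  let σ : ℕ → List ℕ := fun n =>
    if hn : n < S.card then e.symm ⟨n, hn⟩ else List.replicate (p n) 0
  let cost : List ℕ → ℝ := fun τ => 1 / h τ.length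
  let a : ℕ → ℝ := fun n => if hn : n < S.card then cost (e.symm ⟨n, hn⟩) else 0
  have ha : ∀ n ∉ Finset.range S.card, a n = 0 := fun n hn =>
    dif_neg (Finset.mem_range.not.1 hn)
  have hasum : ∑' n, a n = ∑ τ ∈ S, cost τ := by
    rw [tsum_eq_sum ha, Finset.sum_range, ← Finset.sum_coe_sort S, ← e.symm.sum_comp]
    exact Finset.sum_congr rfl fun i _ => dif_pos i.isLt
  have hcost : ∀ n, cost (σ n) ≤ a n + 1 / h (p n) := by
    intro n
    by_cases hn : n < S.card
    · simp only [σ, a, dif_pos hn, le_add_iff_nonneg_right]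
      positivity
    · simp only [σ, a, dif_neg hn, List.length_replicate, zero_add, cost, le_refl]
  have hbound : Summable fun n => a n + 1 / h (p n) :=
    (summable_of_ne_finset_zero ha).add hpsum
  have hcsum : Summable fun n => cost (σ n) :=
    hbound.of_nonneg_of_le (fun n => by positivity) hcost
  refine ⟨σ, hcsum, ?_, ?_⟩
  · calc ∑' n, cost (σ n) ≤ ∑' n, (a n + 1 / h (p n)) := hcsum.tsum_le_tsum hcost hbound
      _ = ∑ τ ∈ S, cost τ + ∑' n, (1 : ℝ) / h (p n) := by
        rw [(summable_of_ne_finset_zero ha).tsum_add hpsum, hasum]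
      _ < ε / 2 + ε / 2 := add_lt_add hS hp
      _ = ε := add_halves ε
  · intro x hx
    obtain ⟨τ, hτ, hxτ⟩ := mem_iUnion₂.1 (hFS hx)
    refine mem_iUnion.2 ⟨e ⟨τ, hτ⟩, ?_⟩
    simp [σ, hxτ]

theorem pi_Iio_subset_iUnion_cylinder (k : ℕ → ℕ) (l : ℕ) :
    univ.pi (fun n => Iio (k n)) ⊆
      ⋃ σ ∈ (Fintype.piFinset fun i : Fin l => Finset.range (k i)).image List.ofFn,
        cylinder σ := by
  intro z hz
  refine mem_iUnion₂.2 ⟨List.ofFn fun i : Fin l => z i, Finset.mem_image_of_mem _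
    (Fintype.mem_piFinset.2 fun i => Finset.mem_range.2 (hz i trivial)), fun i => ?_⟩
  simp

theorem fN_pi_Iio {h k : ℕ → ℕ} (hh : LimsupInfty h)
    (hhk : ∀ ε > 0, ∃ l, (∏ i ∈ Finset.range l, k i : ℕ) / (h l : ℝ) < ε) :
    fN h (univ.pi fun n => Iio (k n)) := by
  refine fN_of_finite_covers hh fun ε hε => ?_
  obtain ⟨l, hl⟩ := hhk ε hε
  refine ⟨_, ?_, pi_Iio_subset_iUnion_cylinder k l⟩
  set S := (Fintype.piFinset fun i : Fin l => Finset.range (k i)).image List.ofFn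
  have hlen : ∀ σ ∈ S, σ.length = l := by
    intro σ hσ
    obtain ⟨v, -, rfl⟩ := Finset.mem_image.1 hσ
    exact List.length_ofFn
  have hcard : S.card ≤ ∏ i ∈ Finset.range l, k i := by
    refine Finset.card_image_le.trans_eq ?_
    rw [Fintype.card_piFinset, Fin.prod_univ_eq_prod_range (fun i => (Finset.range (k i)).card)]
    simp
  calc ∑ σ ∈ S, (1 : ℝ) / h σ.length = S.card / (h l : ℝ) := by
        rw [Finset.sum_congr rfl fun σ hσ => by rw [hlen σ hσ], Finset.sum_const, nsmul_eq_mul,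
          mul_one_div]
    _ ≤ (∏ i ∈ Finset.range l, k i : ℕ) / (h l : ℝ) := by gcongr
    _ < ε := hl

-- The `+ 1` keeps `0` out of every `range (prefixCode x)`, so that `weight x 0 = 1`.
def prefixCode (x : ℕ → Bool) (k : ℕ) : ℕ :=
  Encodable.encode (List.ofFn fun i : Fin k => x i) + 1

theorem prefixCode_eq_prefixCode {x y : ℕ → Bool} {k m : ℕ}
    (h : prefixCode x k = prefixCode y m) : k = m ∧ ∀ i < k, x i = y i := by
  have hl := Encodable.encode_injective (add_right_cancel h)
  obtain rfl : k = m := by simpa using congrArg List.length hl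
  exact ⟨rfl, fun i hi => congrFun (List.ofFn_injective hl) ⟨i, hi⟩⟩

theorem prefixCode_injective (x : ℕ → Bool) : Function.Injective (prefixCode x) :=
  fun _ _ h => (prefixCode_eq_prefixCode h).1

theorem exists_prefixCode_gt_notMem_range {x y : ℕ → Bool} (hxy : x ≠ y) (M : ℕ) :
    ∃ k, M < prefixCode x k ∧ prefixCode x k ∉ range (prefixCode y) := by
  obtain ⟨i, hi⟩ := Function.ne_iff.1 hxy
  obtain ⟨k, hkM, hik⟩ := (((prefixCode_injective x).nat_tendsto_atTop.eventually_gt_atTop M).and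
    (eventually_gt_atTop i)).exists
  refine ⟨k, hkM, ?_⟩
  rintro ⟨m, hm⟩
  obtain ⟨rfl, heq⟩ := prefixCode_eq_prefixCode hm
  exact hi (heq i hik).symm

def tower (n : ℕ) : ℕ := 2 ^ 3 ^ n

theorem one_lt_tower (n : ℕ) : 1 < tower n :=
  Nat.one_lt_two_pow (by positivity)

theorem prod_tower_mul_two_pow_le (l : ℕ) :
    (∏ i ∈ Finset.range l, tower i) * 2 ^ l ≤ tower l := by
  induction l with
  | zero => simp [tower]
  | succ l ih =>
    calc (∏ i ∈ Finset.range (l + 1), tower i) * 2 ^ (l + 1)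
        = (∏ i ∈ Finset.range l, tower i) * 2 ^ l * tower l * 2 := by
          rw [Finset.prod_range_succ]; ring
      _ ≤ tower l * tower l * 2 := by gcongr
      _ = 2 ^ (2 * 3 ^ l + 1) := by simp only [tower]; ring
      _ ≤ tower (l + 1) := Nat.pow_le_pow_right two_pos (by rw [pow_succ]; linarith [Nat.one_le_pow l 3 three_pos])

open Classical in
noncomputable def weight (x : ℕ → Bool) (n : ℕ) : ℕ :=
  if n ∈ range (prefixCode x) then tower n else 1

section weight

variable {x y : ℕ → Bool} {n : ℕ}

theorem weight_of_mem (h : n ∈ range (prefixCode x)) : weight x n = tower n := by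
  simp [weight, h]

theorem weight_of_notMem (h : n ∉ range (prefixCode x)) : weight x n = 1 := by
  simp [weight, h]

theorem weight_zero (x : ℕ → Bool) : weight x 0 = 1 :=
  weight_of_notMem fun ⟨_, h⟩ => Nat.succ_ne_zero _ h

theorem one_le_weight (x : ℕ → Bool) (n : ℕ) : 1 ≤ weight x n := by
  unfold weight; split_ifs
  exacts [(one_lt_tower n).le, le_rfl]

theorem weight_le_tower (x : ℕ → Bool) (n : ℕ) : weight x n ≤ tower n := by
  unfold weight; split_ifs
  exacts [le_rfl, (one_lt_tower n).le]

theorem weight_injective : Function.Injective weight := by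
  intro x y hxy
  by_contra hne
  obtain ⟨k, -, hy⟩ := exists_prefixCode_gt_notMem_range hne 0
  have := congrFun hxy (prefixCode x k)
  rw [weight_of_mem ⟨k, rfl⟩, weight_of_notMem hy] at this
  exact (one_lt_tower _).ne' this

theorem limsupInfty_weight (x : ℕ → Bool) : LimsupInfty (weight x) := by
  intro m
  have hfreq : ∃ᶠ n in atTop, n ∈ range (prefixCode x) :=
    Nat.frequently_atTop_iff_infinite.2 (infinite_range_of_injective (prefixCode_injective x))
  refine (hfreq.and_eventually (eventually_ge_atTop m)).mono fun n ⟨hn, hmn⟩ => ?_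
  rw [weight_of_mem hn]
  exact hmn.trans (Nat.lt_two_pow_self.trans_le
    (Nat.pow_le_pow_right two_pos (Nat.lt_pow_self (by norm_num)).le)).le

theorem weight_le_prod_weight_succ (y : ℕ → Bool) (l : ℕ) :
    weight y l ≤ ∏ i ∈ Finset.range l, weight y (i + 1) := by
  cases l with
  | zero => simp [weight_zero]
  | succ l =>
    exact Finset.single_le_prod' (fun i _ => one_le_weight y (i + 1)) (Finset.self_mem_range_succ l)

theorem prod_weight_succ_mul_two_pow_le {l : ℕ} (hx : l ∈ range (prefixCode x))
    (hy : l ∉ range (prefixCode y)) :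
    (∏ i ∈ Finset.range l, weight y (i + 1)) * 2 ^ l ≤ weight x l := by
  have hshift : ∏ i ∈ Finset.range l, weight y (i + 1) = ∏ i ∈ Finset.range l, weight y i := by
    have := Finset.prod_range_succ' (weight y) l
    rw [Finset.prod_range_succ, weight_of_notMem hy, weight_zero] at this
    simpa using this.symm
  rw [hshift, weight_of_mem hx]
  refine le_trans ?_ (prod_tower_mul_two_pow_le l)
  gcongr with i
  exact weight_le_tower y i

end weight

theorem fN_weight_pi_Iio_weight_succ {x y : ℕ → Bool} (hxy : x ≠ y) :
    fN (weight x) (univ.pi fun n => Iio (weight y (n + 1))) := by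
  refine fN_pi_Iio (limsupInfty_weight x) fun ε hε => ?_
  obtain ⟨K, hK⟩ := exists_pow_lt_of_lt_one hε one_half_lt_one
  obtain ⟨k, hKk, hy⟩ := exists_prefixCode_gt_notMem_range hxy K
  refine ⟨prefixCode x k, ?_⟩
  have hle := prod_weight_succ_mul_two_pow_le ⟨k, rfl⟩ hy
  have hpos : (0 : ℝ) < weight x (prefixCode x k) := by exact_mod_cast one_le_weight x _
  calc ((∏ i ∈ Finset.range (prefixCode x k), weight y (i + 1) : ℕ) : ℝ)
        / weight x (prefixCode x k)
      ≤ (1 / 2) ^ prefixCode x k := by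
        rw [div_le_iff₀ hpos, one_div_pow, div_mul_eq_mul_div, one_mul,
          le_div_iff₀ (by positivity)]
        exact_mod_cast hle
    _ ≤ (1 / 2) ^ K := pow_le_pow_of_le_one (by norm_num) (by norm_num) hKk.le
    _ < ε := hK

theorem stmt17 :
    ∃ H : Set (ℕ → ℕ),
      Cardinal.mk H = Cardinal.continuum ∧
      (∀ h ∈ H, (∀ n, 1 ≤ h n) ∧ LimsupInfty h) ∧
      (∀ f ∈ H, ∀ g ∈ H, f ≠ g → ∃ F : Set (ℕ → ℕ), fN f F ∧ ¬ fN g F) := by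
  refine ⟨range weight, ?_, ?_, ?_⟩
  · rw [Cardinal.mk_range_eq _ weight_injective]
    simp
  · rintro _ ⟨x, rfl⟩
    exact ⟨one_le_weight x, limsupInfty_weight x⟩
  · rintro _ ⟨x, rfl⟩ _ ⟨y, rfl⟩ hxy
    exact ⟨_, fN_weight_pi_Iio_weight_succ (ne_of_apply_ne _ hxy),
      not_fN_pi_Iio (one_le_weight y) (weight_le_prod_weight_succ y)⟩
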